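/- arXiv:2411.13723 — 7 statements merged into one kernel-verified Lean document; each statement's English description precedes it below -/
import Mathlib

section
/- Let M and N be free Steiner triple systems, and suppose A is an infinite free base of M that extends to a free base B of N (with M ⊆ N the substructure generated by A). Then M is an elementary substructure of N. -/
universe u v

open FirstOrder

/-- The language of Steiner quasigroups: a single binary function symbol. -/
def sqLang : FirstOrder.Language :=
  ⟨fun n => match n with | 2 => Unit | _ => Empty, fun _ => Empty⟩

/-- The `sqLang`-structure given by a binary operation. -/
def sqStructure {M : Type u} (op : M → M → M) : sqLang.Structure M where
  funMap {n} f x :=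
    match n, f with
    | 2, _ => op (x 0) (x 1)
  RelMap {n} r _ := nomatch r

/-- A Steiner quasigroup operation. -/
def IsSQ {M : Type u} (op : M → M → M) : Prop :=
  (∀ x y, op x y = op y x) ∧ (∀ x, op x x = x) ∧ (∀ x y, op x (op x y) = y)

/-- The substructure (as a set) generated by `A`. -/
def SubGen {N : Type u} (op : N → N → N) (A : Set N) : Set N :=
  ⋂₀ {S : Set N | A ⊆ S ∧ ∀ x ∈ S, ∀ y ∈ S, op x y ∈ S}

section Aux

variable {N : Type u} (op : N → N → N)

lemma subGen_le {A S : Set N} (h1 : A ⊆ S) (h2 : ∀ x ∈ S, ∀ y ∈ S, op x y ∈ S) :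
    SubGen op A ⊆ S :=
  Set.sInter_subset_of_mem ⟨h1, h2⟩

lemma subset_subGen {A : Set N} : A ⊆ SubGen op A :=
  fun a ha => Set.mem_sInter.2 fun _ hS => hS.1 ha

lemma subGen_closed {A : Set N} :
    ∀ x ∈ SubGen op A, ∀ y ∈ SubGen op A, op x y ∈ SubGen op A :=
  fun x hx y hy => Set.mem_sInter.2 fun S hS =>
    hS.2 x (Set.mem_sInter.1 hx S hS) y (Set.mem_sInter.1 hy S hS)

lemma subGen_mono {A C : Set N} (h : A ⊆ C) : SubGen op A ⊆ SubGen op C :=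
  subGen_le op (h.trans (subset_subGen op)) (subGen_closed op)

lemma hom_eqOn {f g : N → N} (hf : ∀ x y, f (op x y) = op (f x) (f y))
    (hg : ∀ x y, g (op x y) = op (g x) (g y)) {C : Set N}
    (h : ∀ c ∈ C, f c = g c) : ∀ x ∈ SubGen op C, f x = g x :=
  fun x hx => subGen_le op (S := {z | f z = g z}) h
    (fun a ha b hb => by simp only [Set.mem_setOf_eq] at *; rw [hf, hg, ha, hb]) hx

lemma hom_image {f : N → N} (hf : ∀ x y, f (op x y) = op (f x) (f y)) {C : Set N} :
    ∀ x ∈ SubGen op C, f x ∈ SubGen op (f '' C) :=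
  fun x hx => subGen_le op (S := f ⁻¹' SubGen op (f '' C))
    (fun c hc => subset_subGen op ⟨c, hc, rfl⟩)
    (fun a ha b hb => by
      simp only [Set.mem_preimage] at *
      rw [hf]
      exact subGen_closed op _ ha _ hb) hx

lemma subGen_finite {B : Set N} {x : N} (hx : x ∈ SubGen op B) :
    ∃ F : Finset N, ↑F ⊆ B ∧ x ∈ SubGen op ↑F := by
  classical
  refine subGen_le op (S := {y | ∃ F : Finset N, ↑F ⊆ B ∧ y ∈ SubGen op ↑F})
    (fun b hb => ⟨{b}, by simpa using hb, subset_subGen op (by simp)⟩) ?_ hx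
  rintro a ⟨F₁, h1, ha1⟩ b ⟨F₂, h2, hb2⟩
  refine ⟨F₁ ∪ F₂, by simp [Set.union_subset_iff, h1, h2], ?_⟩
  have hc : (↑(F₁ ∪ F₂) : Set N) = ↑F₁ ∪ ↑F₂ := by simp
  exact subGen_closed op _ (subGen_mono op (by simp [hc]) ha1)
    _ (subGen_mono op (by simp [hc]) hb2)

noncomputable def sqEquivOfInvolutive (f : N → N)
    (hf : ∀ x y, f (op x y) = op (f x) (f y)) (hinv : Function.Involutive f) :
    @FirstOrder.Language.Equiv sqLang N N (sqStructure op) (sqStructure op) :=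
  letI : sqLang.Structure N := sqStructure op
  { toEquiv := Function.Involutive.toPerm f hinv
    map_fun' := by
      intro n s x
      match n, s with
      | 2, _ => exact hf (x 0) (x 1)
    map_rel' := by
      intro n r x
      exact r.elim }

end Aux

/-- `A` is a free base of the subsystem `S` of `N`: `A ⊆ S`, `S` is closed, `A` generates `S`,
and every map from `A` into any Steiner quasigroup extends to a homomorphism on `S`. -/
def FreeBaseOfSet {N : Type u} (op : N → N → N) (A S : Set N) : Prop :=
  A ⊆ S ∧ (∀ x ∈ S, ∀ y ∈ S, op x y ∈ S) ∧
    (∀ T : Set N, A ⊆ T → T ⊆ S → (∀ x ∈ T, ∀ y ∈ T, op x y ∈ T) → T = S) ∧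
    ∀ (P : Type v) (opP : P → P → P), IsSQ opP → ∀ φ : A → P,
      ∃ f : N → P, (∀ x ∈ S, ∀ y ∈ S, f (op x y) = opP (f x) (f y)) ∧ ∀ a : A, f a = φ a

/-- `B` is a free base of all of `N`. -/
def FreeBaseOf {N : Type u} (op : N → N → N) (B : Set N) : Prop :=
  FreeBaseOfSet.{u, v} op B Set.univ

/-- If `A` is an infinite free base of the substructure `M = ⟨A⟩ ⊆ N` and `A` extends to a
free base `B` of `N`, then `M` is an elementary substructure of `N`. -/
theorem free_base_extension_elementary {N : Type u} (op : N → N → N) (hN : IsSQ op)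
    (A : Set N) (hAinf : A.Infinite)
    (M : Set N) (hMgen : M = SubGen op A)
    (hAfree : FreeBaseOfSet.{u, u} op A M)
    (B : Set N) (hAB : A ⊆ B) (hBfree : FreeBaseOf.{u, u} op B)
    (inst : sqLang.Structure N) (hinst : inst = sqStructure op)
    (S : @FirstOrder.Language.Substructure sqLang N inst)
    (hS : (S : Set N) = M) :
    @FirstOrder.Language.Substructure.IsElementary sqLang N inst S := by
  classical
  subst hinst
  subst hMgen
  letI : sqLang.Structure N := sqStructure op
  refine S.isElementary_of_exists ?_
  intro k φ x a ha
  -- B generates N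
  have hBgen : SubGen op B = Set.univ :=
    hBfree.2.2.1 (SubGen op B) (subset_subGen op) (Set.subset_univ _) (subGen_closed op)
  -- finite generators for a
  have haB : a ∈ SubGen op B := by rw [hBgen]; trivial
  obtain ⟨Fa, hFaB, haFa⟩ := subGen_finite op haB
  -- finite generators for the x i
  have hxM : ∀ i, (x i : N) ∈ SubGen op A := fun i => hS ▸ (x i).2
  choose Ax hAxA hxAx using fun i => subGen_finite op (hxM i)
  set A₀ : Finset N := (Finset.univ.biUnion Ax) ∪ Fa.filter (· ∈ A) with hA₀def
  have hA₀A : (↑A₀ : Set N) ⊆ A := by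
    intro z hz
    simp only [hA₀def, Finset.coe_union, Set.mem_union, Finset.coe_biUnion, Finset.coe_univ,
      Set.mem_iUnion, Finset.coe_filter, Set.mem_setOf_eq, Finset.mem_coe] at hz
    rcases hz with ⟨i, _, hi⟩ | ⟨_, h⟩
    · exact hAxA i hi
    · exact h
  have hxA₀ : ∀ i, (x i : N) ∈ SubGen op (↑A₀ : Set N) := by
    intro i
    refine subGen_mono op ?_ (hxAx i)
    intro z hz
    simp only [hA₀def, Finset.coe_union, Set.mem_union, Finset.coe_biUnion, Finset.coe_univ,
      Set.mem_iUnion, Finset.mem_coe] at *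
    exact Or.inl ⟨i, trivial, hz⟩
  set F : Finset N := Fa.filter (· ∉ A) with hFdef
  have hFB : (↑F : Set N) ⊆ B := fun z hz => hFaB (by
    simp only [hFdef, Finset.coe_filter, Set.mem_setOf_eq] at hz
    exact hz.1)
  have hFnA : ∀ z ∈ F, z ∉ A := by
    intro z hz
    simp only [hFdef, Finset.mem_filter] at hz
    exact hz.2
  -- fresh elements t ⊆ A \ A₀
  have hinfdiff : (A \ ↑A₀).Infinite := hAinf.diff A₀.finite_toSet
  have hemb : Nonempty ({z // z ∈ F} ↪ ↥(A \ ↑A₀)) := by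
    have h1 : Cardinal.mk {z // z ∈ F} < Cardinal.aleph0 := Cardinal.lt_aleph0_of_finite _
    have h2 : Cardinal.aleph0 ≤ Cardinal.mk ↥(A \ ↑A₀) := by
      haveI := hinfdiff.to_subtype
      exact Cardinal.infinite_iff.1 inferInstance
    exact (Cardinal.le_def _ _).1 (h1.le.trans h2)
  obtain ⟨emb⟩ := hemb
  set g0 : {z // z ∈ F} → N := fun z => ((emb z : ↥(A \ ↑A₀)) : N) with hg0def
  have hg0inj : Function.Injective g0 :=
    fun a b h => emb.injective (Subtype.ext h)
  set t : Set N := Set.range g0 with htdef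
  have htAd : t ⊆ A \ ↑A₀ := by rintro _ ⟨z, rfl⟩; exact (emb z).2
  set eqv : {z // z ∈ F} ≃ ↥t := Equiv.ofInjective g0 hg0inj with heqvd
  have heqv : ∀ w, (eqv w : N) = g0 w := fun w => by
    rw [heqvd]; exact congrArg Subtype.val (Equiv.ofInjective_apply g0 hg0inj w)
  -- the swap map
  set e : N → N := fun z =>
    if hz : z ∈ F then g0 ⟨z, hz⟩ else if hz : z ∈ t then (eqv.symm ⟨z, hz⟩ : N) else z
    with hedef
  have hFt : ∀ z ∈ F, z ∉ t := fun z hz hzt => hFnA z hz (htAd hzt).1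
  have htF : ∀ z ∈ t, z ∉ F := fun z hz hzF => hFt z hzF hz
  have heF : ∀ z (hz : z ∈ F), e z = g0 ⟨z, hz⟩ := by
    intro z hz; simp only [hedef, dif_pos hz]
  have het : ∀ z (hz : z ∈ t), z ∉ F → e z = (eqv.symm ⟨z, hz⟩ : N) := by
    intro z hz hzF; simp only [hedef, dif_neg hzF, dif_pos hz]
  have heo : ∀ z, z ∉ F → z ∉ t → e z = z := by
    intro z h1 h2; simp only [hedef, dif_neg h1, dif_neg h2]
  have hg0t : ∀ w, g0 w ∈ t := fun w => ⟨w, rfl⟩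
  have he_inv : Function.Involutive e := by
    intro z
    by_cases hz : z ∈ F
    · rw [heF z hz]
      have h1 : g0 ⟨z, hz⟩ ∈ t := hg0t _
      rw [het _ h1 (htF _ h1)]
      have : (⟨g0 ⟨z, hz⟩, h1⟩ : ↥t) = eqv ⟨z, hz⟩ := Subtype.ext (heqv _).symm
      rw [this, Equiv.symm_apply_apply]
    · by_cases hz2 : z ∈ t
      · rw [het z hz2 hz]
        set w := eqv.symm ⟨z, hz2⟩ with hwdef
        have hwF : (w : N) ∈ F := w.2
        rw [heF _ hwF]
        have : (⟨(w : N), hwF⟩ : {z // z ∈ F}) = w := Subtype.ext rfl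
        rw [this]
        have : g0 w = (eqv w : N) := (heqv w).symm
        rw [this, hwdef, Equiv.apply_symm_apply]
      · rw [heo z hz hz2, heo z hz hz2]
  have heA₀ : ∀ z ∈ (↑A₀ : Set N), e z = z := by
    intro z hz
    have h1 : z ∉ F := fun h => hFnA z h (hA₀A hz)
    have h2 : z ∉ t := fun h => (htAd h).2 hz
    exact heo z h1 h2
  have htA : t ⊆ A := fun z hz => (htAd hz).1
  have heB : ∀ b ∈ B, e b ∈ B := by
    intro b hb
    by_cases h1 : b ∈ F
    · rw [heF b h1]; exact hAB (htA (hg0t _))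
    · by_cases h2 : b ∈ t
      · rw [het b h2 h1]; exact hFB (eqv.symm ⟨b, h2⟩).2
      · rw [heo b h1 h2]; exact hb
  have heFa : ∀ b ∈ Fa, e b ∈ A := by
    intro b hb
    by_cases h1 : b ∈ A
    · have hbF : b ∉ F := by simp [hFdef, Finset.mem_filter, h1]
      have hbA₀ : b ∈ (↑A₀ : Set N) := by
        simp only [hA₀def, Finset.coe_union, Set.mem_union, Finset.coe_filter,
          Set.mem_setOf_eq]
        exact Or.inr ⟨hb, h1⟩
      have hbt : b ∉ t := fun h => (htAd h).2 hbA₀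
      rw [heo b hbF hbt]; exact h1
    · have hbF : b ∈ F := by simp [hFdef, Finset.mem_filter, hb, h1]
      rw [heF b hbF]; exact htA (hg0t _)
  -- extend e to a homomorphism f on N
  obtain ⟨f, hfhom0, hfB0⟩ := hBfree.2.2.2 N op hN (fun b => e ↑b)
  have hfhom : ∀ x y : N, f (op x y) = op (f x) (f y) := fun x y =>
    hfhom0 x trivial y trivial
  have hfeB : ∀ b ∈ B, f b = e b := fun b hb => hfB0 ⟨b, hb⟩
  have hid : ∀ x y : N, id (op x y) = op (id x) (id y) := fun _ _ => rfl
  have hffhom : ∀ x y : N, (f ∘ f) (op x y) = op ((f ∘ f) x) ((f ∘ f) y) := by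
    intro x y; simp only [Function.comp_apply, hfhom]
  have hfinv : Function.Involutive f := by
    intro z
    have hz : z ∈ SubGen op B := by rw [hBgen]; trivial
    have := hom_eqOn op hffhom hid (C := B) ?_ z hz
    · exact this
    · intro c hc
      simp only [Function.comp_apply, id_eq]
      rw [hfeB c hc, hfeB _ (heB c hc), he_inv c]
  have hfA₀ : ∀ z ∈ SubGen op (↑A₀ : Set N), f z = z := by
    intro z hz
    have := hom_eqOn op hfhom hid (C := (↑A₀ : Set N)) ?_ z hz
    · exact this
    · intro c hc
      simp only [id_eq]
      rw [hfeB c (hAB (hA₀A hc)), heA₀ c hc]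
  have hfa : f a ∈ SubGen op A := by
    have h1 : f a ∈ SubGen op (f '' ↑Fa) := hom_image op hfhom a haFa
    refine subGen_mono op ?_ h1
    rintro _ ⟨b, hb, rfl⟩
    rw [hfeB b (hFaB hb)]
    exact heFa b (by exact_mod_cast hb)
  refine ⟨⟨f a, by show f a ∈ (S : Set N); rw [hS]; exact hfa⟩, ?_⟩
  set σ := sqEquivOfInvolutive op f hfhom hfinv with hσdef
  have hσ : ∀ z, σ z = f z := fun z => rfl
  have key := (FirstOrder.Language.StrongHomClass.realize_boundedFormula (L := sqLang) (M := N) (N := N)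
    σ φ (v := (default : Empty → N)) (xs := Fin.snoc ((↑) ∘ x) a)).2 ha
  have h1 : (⇑σ ∘ (default : Empty → N)) = default := funext fun z => z.elim
  have h2 : ⇑σ ∘ Fin.snoc ((↑) ∘ x) a = Fin.snoc ((↑) ∘ x) (f a) := by
    rw [Fin.comp_snoc]
    have h3 : ⇑σ ∘ ((↑) ∘ x) = ((↑) ∘ x) := funext fun i => by
      show σ ((x i : N)) = (x i : N)
      rw [hσ]
      exact hfA₀ _ (hxA₀ i)
    rw [h3, hσ a]
  rw [h1, h2] at key
  exact key
end

section
/- Any two free Steiner triple systems with infinite free bases are elementarily equivalent. -/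
/-!
Let `M` be free on an infinite base `A` and `s ⊆ A` infinite. The closure of `s` is an elementary
substructure of `M` by the Tarski–Vaught test: the parameters and the witness are generated by
finitely many points of `A`, and a permutation of `A` that fixes the generators of the parameters
and moves those of the witness into `s` extends to an automorphism of `M`. Taking `s ⊆ A` and
`t ⊆ B` countably infinite, the closures of `s` and `t` are free on equinumerous bases, hence
isomorphic, so `M ≡ ⟨s⟩ ≅ ⟨t⟩ ≡ N`.
-/

universe u v

open FirstOrder

/-- `A` generates `M` under `op`. -/
def Generates {M : Type u} (op : M → M → M) (A : Set M) : Prop :=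
  ∀ S : Set M, A ⊆ S → (∀ x ∈ S, ∀ y ∈ S, op x y ∈ S) → S = Set.univ

/-- `M` is freely generated by `A`. -/
def FreelyGenerated {M : Type u} (op : M → M → M) (A : Set M) : Prop :=
  Generates op A ∧
    ∀ (P : Type v) (opP : P → P → P), IsSQ opP → ∀ φ : A → P,
      ∃ f : M → P, (∀ x y, f (op x y) = opP (f x) (f y)) ∧ ∀ a : A, f a = φ a


open Set

theorem Set.Infinite.exists_subset_nonempty_equiv_nat {α : Type*} {s : Set α}
    (hs : s.Infinite) : ∃ t ⊆ s, Nonempty (t ≃ ℕ) :=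
  ⟨_, range_subset_iff.2 fun n => (hs.natEmbedding _ n).2,
    ⟨(Equiv.ofInjective _ (Subtype.val_injective.comp (hs.natEmbedding _).injective)).symm⟩⟩

theorem Set.exists_perm_eqOn_id_mapsTo {α : Type*} {s F S : Set α} (hs : s.Infinite)
    (hFs : F ⊆ s) (hF : F.Finite) (hS : S.Finite) :
    ∃ p : Equiv.Perm α, EqOn p id F ∧ MapsTo p S s := by
  classical
  set K := F ∪ S
  have hK : K.Finite := hF.union hS
  have : Finite K := hK.to_subtype
  have : Infinite α := hs.to_subtype.of_injective _ Subtype.val_injective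
  -- `f` fixes `K ∩ s` and sends `K \ s` to fresh points of `s`; it extends to a permutation.
  let j : K ↪ ↥(s \ K) := (Finite.equivFin K).toEmbedding.trans
    (Fin.valEmbedding.trans (hs.sdiff hK).natEmbedding)
  have hj : ∀ z, (j z : α) ∈ s ∧ (j z : α) ∉ K := fun z => (j z).2
  let f : K ↪ α := ⟨fun z => if (z : α) ∈ s then z else j z, by
    intro y z hyz
    by_cases hy : (y : α) ∈ s <;> by_cases hz : (z : α) ∈ s <;>
      simp only [hy, hz, if_true, if_false] at hyz
    · exact Subtype.ext hyz
    · exact absurd (hyz ▸ y.2) (hj z).2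
    · exact absurd (hyz ▸ z.2) (hj y).2
    · exact j.injective (Subtype.ext hyz)⟩
  have hf : ∀ z, f z = if (z : α) ∈ s then (z : α) else j z := fun _ => rfl
  obtain ⟨p, hp⟩ := Cardinal.extend_function_of_lt f
    ((Cardinal.lt_aleph0_of_finite K).trans_le (Cardinal.aleph0_le_mk α)) ⟨Equiv.refl α⟩
  refine ⟨p, fun x hx => ?_, fun x hx => ?_⟩
  · rw [hp ⟨x, Or.inl hx⟩, hf, if_pos (hFs hx), id]
  · rw [hp ⟨x, Or.inr hx⟩, hf]
    split_ifs with h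
    exacts [h, (hj _).1]

namespace FirstOrder.Language

variable {L : Language} {M N : Type*} [L.Structure M] [L.Structure N]

def IsFreeFor (L : Language) {M : Type*} [L.Structure M] (A : Set M) (P : Type*)
    [L.Structure P] : Prop :=
  ∀ φ : A → P, ∃ f : M →[L] P, ∀ a : A, f a = φ a

def Equiv.ofHoms (f : M →[L] N) (g : N →[L] M) (hgf : ∀ x, g (f x) = x)
    (hfg : ∀ y, f (g y) = y) : M ≃[L] N where
  toFun := f
  invFun := g
  left_inv := hgf
  right_inv := hfg
  map_fun' F x := f.map_fun F x
  map_rel' r x := ⟨fun h => by simpa [Function.comp_def, hgf] using g.map_rel r _ h,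
    f.map_rel r x⟩

namespace Substructure

theorem exists_finite_subset_mem_closure {s : Set M} {x : M} (hx : x ∈ closure L s) :
    ∃ t ⊆ s, t.Finite ∧ x ∈ closure L t := by
  refine closure_induction (p := fun x => ∃ t ⊆ s, t.Finite ∧ x ∈ closure L t) hx
    (fun y hy => ⟨{y}, by simpa, finite_singleton y, subset_closure rfl⟩) fun F v hv => ?_
  choose t hts ht hvt using hv
  refine ⟨⋃ i, t i, iUnion_subset hts, finite_iUnion ht, fun_mem _ _ _ fun i => ?_⟩
  exact closure_mono (subset_iUnion t i) (hvt i)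

theorem exists_finite_subset_subset_closure {s t : Set M} (ht : t.Finite)
    (hts : t ⊆ closure L s) : ∃ u ⊆ s, u.Finite ∧ t ⊆ closure L u := by
  have : Finite t := ht.to_subtype
  choose u hus hu htu using fun x : t => exists_finite_subset_mem_closure (hts x.2)
  refine ⟨⋃ x, u x, iUnion_subset hus, finite_iUnion hu, fun x hx => ?_⟩
  exact closure_mono (subset_iUnion u ⟨x, hx⟩) (htu ⟨x, hx⟩)

end Substructure

open Substructure

theorem Hom.mapsTo_closure (f : M →[L] N) {s : Set M} {t : Set N} (h : MapsTo f s t) :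
    MapsTo f (closure L s) (closure L t) := fun x hx => by
  have := mem_map_of_mem f hx
  rw [map_closure] at this
  exact closure_mono (image_subset_iff.2 h) this

theorem IsFreeFor.exists_equiv_extending_perm {A : Set M} (hA : closure L A = ⊤)
    (hfree : IsFreeFor L A M) (p : _root_.Equiv.Perm A) :
    ∃ σ : M ≃[L] M, ∀ a : A, σ a = p a := by
  obtain ⟨f, hf⟩ := hfree fun a => p a
  obtain ⟨g, hg⟩ := hfree fun a => p.symm a
  have hgf : g.comp f = Hom.id L M := Hom.eq_of_eqOn_dense hA fun a ha => by
    simp [hf ⟨a, ha⟩, hg]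
  have hfg : f.comp g = Hom.id L M := Hom.eq_of_eqOn_dense hA fun a ha => by
    simp [hf, hg ⟨a, ha⟩]
  exact ⟨Equiv.ofHoms f g (DFunLike.congr_fun hgf) (DFunLike.congr_fun hfg), hf⟩

theorem IsFreeFor.exists_equiv_eqOn_id_mapsTo {A : Set M} (hA : closure L A = ⊤)
    (hfree : IsFreeFor L A M) {s F S : Set M} (hsA : s ⊆ A) (hs : s.Infinite) (hFs : F ⊆ s)
    (hF : F.Finite) (hSA : S ⊆ A) (hS : S.Finite) :
    ∃ σ : M ≃[L] M, EqOn σ id F ∧ MapsTo σ S s := by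
  obtain ⟨p, hpF, hpS⟩ := exists_perm_eqOn_id_mapsTo (s := ((↑) : A → M) ⁻¹' s)
    (hs.preimage (by simpa using hsA)) (preimage_mono hFs)
    (hF.preimage Subtype.val_injective.injOn) (hS.preimage Subtype.val_injective.injOn)
  obtain ⟨σ, hσ⟩ := hfree.exists_equiv_extending_perm hA p
  refine ⟨σ, fun x hx => ?_, fun x hx => ?_⟩
  · rw [hσ ⟨x, hsA (hFs hx)⟩, hpF (show (⟨x, _⟩ : A) ∈ (↑) ⁻¹' F from hx)]; rfl
  · rw [hσ ⟨x, hSA hx⟩]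
    exact hpS (show (⟨x, _⟩ : A) ∈ (↑) ⁻¹' S from hx)

theorem IsFreeFor.isElementary_closure {A : Set M} (hA : closure L A = ⊤)
    (hfree : IsFreeFor L A M) {s : Set M} (hsA : s ⊆ A) (hs : s.Infinite) :
    (closure L s).IsElementary := by
  refine isElementary_of_exists _ fun n φ x a ha => ?_
  obtain ⟨F, hFs, hF, hxF⟩ := exists_finite_subset_subset_closure
    (finite_range (Subtype.val ∘ x)) (range_subset_iff.2 fun i => (x i).2)
  obtain ⟨S, hSA, hS, haS⟩ :=
    exists_finite_subset_mem_closure (hA ▸ mem_top a : a ∈ closure L A)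
  obtain ⟨σ, hσF, hσS⟩ := hfree.exists_equiv_eqOn_id_mapsTo hA hsA hs hFs hF hSA hS
  have hσx : σ ∘ ((↑) ∘ x) = (↑) ∘ x := funext fun i =>
    Hom.eqOn_closure (f := σ.toHom) (g := Hom.id L M) hσF (hxF ⟨i, rfl⟩)
  refine ⟨⟨σ a, σ.toHom.mapsTo_closure hσS haS⟩, ?_⟩
  have := (StrongHomClass.realize_boundedFormula σ φ (v := default)
    (xs := Fin.snoc ((↑) ∘ x) a)).2 ha
  rwa [Fin.comp_snoc, hσx, Unique.eq_default (σ ∘ default)] at this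

theorem IsFreeFor.nonempty_equiv_closure [Nonempty M] [Nonempty N] {A : Set M} {B : Set N}
    (hAB : IsFreeFor L A N) (hBA : IsFreeFor L B M) {s : Set M} {t : Set N} (hsA : s ⊆ A)
    (htB : t ⊆ B) (e : s ≃ t) : Nonempty (closure L s ≃[L] closure L t) := by
  classical
  obtain ⟨f, hf⟩ := hAB fun a => if h : (a : M) ∈ s then e ⟨a, h⟩ else Classical.arbitrary N
  obtain ⟨g, hg⟩ := hBA fun b => if h : (b : N) ∈ t then e.symm ⟨b, h⟩ else Classical.arbitrary M
  have hfs : ∀ x (hx : x ∈ s), f x = e ⟨x, hx⟩ := fun x hx => by simp [hf ⟨x, hsA hx⟩, hx]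
  have hgt : ∀ y (hy : y ∈ t), g y = e.symm ⟨y, hy⟩ := fun y hy => by simp [hg ⟨y, htB hy⟩, hy]
  have hf' := f.mapsTo_closure (L := L) fun x hx => hfs x hx ▸ (e ⟨x, hx⟩).2
  have hg' := g.mapsTo_closure (L := L) fun y hy => hgt y hy ▸ (e.symm ⟨y, hy⟩).2
  have hgf : EqOn (g.comp f) (Hom.id L M) (closure L s) :=
    Hom.eqOn_closure fun x hx => by simp [hfs x hx, hgt]
  have hfg : EqOn (f.comp g) (Hom.id L N) (closure L t) :=
    Hom.eqOn_closure fun y hy => by simp [hgt y hy, hfs]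
  exact ⟨Equiv.ofHoms ((f.domRestrict _).codRestrict _ fun x => hf' x.2)
    ((g.domRestrict _).codRestrict _ fun y => hg' y.2)
    (fun x => Subtype.ext (hgf x.2)) (fun y => Subtype.ext (hfg y.2))⟩

theorem elementarilyEquivalent_of_equiv_isElementary {S : L.Substructure M}
    {T : L.Substructure N} (hS : S.IsElementary) (hT : T.IsElementary) (e : S ≃[L] T) :
    M ≅[L] N :=
  ((⟨S, hS⟩ : L.ElementarySubstructure M).elementarilyEquivalent.symm.trans
    (StrongHomClass.elementarilyEquivalent e)).trans
    (⟨T, hT⟩ : L.ElementarySubstructure N).elementarilyEquivalent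

end FirstOrder.Language

open FirstOrder.Language

section SteinerQuasigroup

variable {M : Type u} {P : Type v} {op : M → M → M} {opP : P → P → P} {A : Set M}

def sqHom (f : M → P) (hf : ∀ x y, f (op x y) = opP (f x) (f y)) :
    letI := sqStructure op; letI := sqStructure opP; M →[sqLang] P :=
  letI := sqStructure op; letI := sqStructure opP
  { toFun := f
    map_fun' := fun {n} F v => match n, F with | 2, _ => hf (v 0) (v 1)
    map_rel' := fun r _ => nomatch r }

theorem Generates.closure_eq_top (h : Generates op A) :
    letI := sqStructure op; Substructure.closure sqLang A = ⊤ := by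
  let _ := sqStructure op
  refine SetLike.coe_injective (h _ Substructure.subset_closure fun x hx y hy => ?_)
  exact Substructure.fun_mem _ (n := 2) () ![x, y] (Fin.forall_fin_two.2 ⟨hx, hy⟩)

theorem FreelyGenerated.isFreeFor (h : FreelyGenerated.{u, v} op A) (hP : IsSQ opP) :
    letI := sqStructure op; letI := sqStructure opP; IsFreeFor sqLang A P := fun φ => by
  obtain ⟨f, hf, hfA⟩ := h.2 P opP hP φ
  exact ⟨sqHom f hf, hfA⟩

end SteinerQuasigroup

/-- Any two free Steiner triple systems with infinite free bases are elementarily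
equivalent. -/
theorem free_STS_elementarily_equivalent {M N : Type u}
    (opM : M → M → M) (opN : N → N → N) (hM : IsSQ opM) (hN : IsSQ opN)
    (A : Set M) (B : Set N)
    (hA : FreelyGenerated.{u, u} opM A) (hAinf : A.Infinite)
    (hB : FreelyGenerated.{u, u} opN B) (hBinf : B.Infinite) :
    @FirstOrder.Language.ElementarilyEquivalent sqLang M N
      (sqStructure opM) (sqStructure opN) := by
  let _ := sqStructure opM
  let _ := sqStructure opN
  have : Nonempty M := hAinf.nonempty.to_subtype.map Subtype.val
  have : Nonempty N := hBinf.nonempty.to_subtype.map Subtype.val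
  obtain ⟨A₀, hA₀A, ⟨eA⟩⟩ := hAinf.exists_subset_nonempty_equiv_nat
  obtain ⟨B₀, hB₀B, ⟨eB⟩⟩ := hBinf.exists_subset_nonempty_equiv_nat
  have hA₀ : A₀.Infinite := infinite_coe_iff.1 (.of_injective _ eA.symm.injective)
  have hB₀ : B₀.Infinite := infinite_coe_iff.1 (.of_injective _ eB.symm.injective)
  obtain ⟨e⟩ := (hA.isFreeFor hN).nonempty_equiv_closure (hB.isFreeFor hM) hA₀A hB₀B
    (eA.trans eB.symm)
  exact elementarilyEquivalent_of_equiv_isElementary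
    ((hA.isFreeFor hM).isElementary_closure hA.1.closure_eq_top hA₀A hA₀)
    ((hB.isFreeFor hN).isElementary_closure hB.1.closure_eq_top hB₀B hB₀) e
end

section
/- If < is an HF-ordering of a partial Steiner triple system B and A ⊆ B is <-closed (i.e. whenever b ∈ A and {b, b₁, b₂} is a block with b₁, b₂ < b, then b₁, b₂ ∈ A), then < is an HF-ordering of B over A. -/
/-- A partial Steiner triple system. -/
def IsPSTS {M : Type*} (Bl : Set (Finset M)) : Prop :=
  (∀ e ∈ Bl, e.card = 3) ∧
    ∀ e ∈ Bl, ∀ f ∈ Bl, ∀ x y : M, x ≠ y → x ∈ e → y ∈ e → x ∈ f → y ∈ f → e = f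

/-- An HF-ordering. -/
def IsHFOrder {M : Type*} (Bl : Set (Finset M)) (r : M → M → Prop) : Prop :=
  IsStrictTotalOrder M r ∧
    ∀ b : M, ∀ e ∈ Bl, ∀ f ∈ Bl, b ∈ e → b ∈ f →
      (∀ x ∈ e, x ≠ b → r x b) → (∀ x ∈ f, x ≠ b → r x b) → e = f

/-- An HF-ordering over `A`. -/
def IsHFOrderOver {M : Type*} (Bl : Set (Finset M)) (A : Set M) (r : M → M → Prop) : Prop :=
  IsStrictTotalOrder M r ∧
    ∀ b : M, b ∉ A → ∀ e ∈ Bl, ∀ f ∈ Bl, b ∈ e → b ∈ f →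
      (∀ x ∈ e, x ≠ b → r x b ∨ x ∈ A) → (∀ x ∈ f, x ≠ b → r x b ∨ x ∈ A) → e = f


private lemma exists_max_r {M : Type*} (r : M → M → Prop) [IsStrictTotalOrder M r] :
    ∀ s : Finset M, s.Nonempty → ∃ m ∈ s, ∀ x ∈ s, x ≠ m → r x m := by
  classical
  intro s
  induction s using Finset.induction with
  | empty => intro h; exact absurd h (by simp)
  | @insert a s ha ih =>
    intro _
    by_cases hs : s.Nonempty
    · obtain ⟨m, hm, hmax⟩ := ih hs
      rcases trichotomous_of r a m with h | h | h
      · exact ⟨m, Finset.mem_insert_of_mem hm, by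
          intro x hx hxm
          rcases Finset.mem_insert.mp hx with rfl | hx
          · exact h
          · exact hmax x hx hxm⟩
      · subst h
        exact ⟨a, Finset.mem_insert_self _ _, by
          intro x hx hxm
          rcases Finset.mem_insert.mp hx with rfl | hx
          · exact absurd rfl hxm
          · exact hmax x hx hxm⟩
      · exact ⟨a, Finset.mem_insert_self _ _, by
          intro x hx hxa
          rcases Finset.mem_insert.mp hx with rfl | hx
          · exact absurd rfl hxa
          · by_cases hxm : x = m
            · subst hxm; exact h
            · exact trans_of r (hmax x hx hxm) h⟩
    · rw [Finset.not_nonempty_iff_eq_empty] at hs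
      subst hs
      exact ⟨a, Finset.mem_insert_self _ _, by
        intro x hx hxa
        rcases Finset.mem_insert.mp hx with rfl | hx
        · exact absurd rfl hxa
        · simp at hx⟩

/-- If `<` is an HF-ordering of `B` and `A` is `<`-closed, then `<` is an HF-ordering of `B`
over `A`. -/
theorem HF_over_closed {M : Type*} (Bl : Set (Finset M)) (hPSTS : IsPSTS Bl)
    (r : M → M → Prop) (hr : IsHFOrder Bl r) (A : Set M)
    (hA : ∀ e ∈ Bl, ∀ b ∈ A, b ∈ e → (∀ x ∈ e, x ≠ b → r x b) → ∀ x ∈ e, x ∈ A) :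
    IsHFOrderOver Bl A r := by
  classical
  haveI := hr.1
  refine ⟨hr.1, ?_⟩
  intro b hbA e he f hf hbe hbf hE hF
  have key : ∀ g ∈ Bl, b ∈ g → (∀ x ∈ g, x ≠ b → r x b ∨ x ∈ A) →
      ∀ x ∈ g, x ≠ b → r x b := by
    intro g hg hbg hgh
    by_contra hc
    push_neg at hc
    obtain ⟨x0, hx0g, hx0b, hx0⟩ := hc
    set S := g.filter (fun x => x ≠ b ∧ ¬ r x b) with hS
    have hSne : S.Nonempty := ⟨x0, by simp [hS, hx0g, hx0b, hx0]⟩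
    obtain ⟨m, hmS, hmax⟩ := exists_max_r r S hSne
    have hmS' : m ∈ g ∧ m ≠ b ∧ ¬ r m b := by simpa [hS] using hmS
    obtain ⟨hmg, hmb, hmrb⟩ := hmS'
    have hmA : m ∈ A := (hgh m hmg hmb).resolve_left hmrb
    have hbm : r b m := by
      rcases trichotomous_of r b m with h | h | h
      · exact h
      · exact absurd h.symm hmb
      · exact absurd h hmrb
    have hmx : ∀ z ∈ g, z ≠ m → r z m := by
      intro z hz hzm
      by_cases hzb : z = b
      · subst hzb; exact hbm
      · by_cases hzrb : r z b
        · exact trans_of r hzrb hbm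
        · exact hmax z (by simp [hS, hz, hzb, hzrb]) hzm
    exact hbA (hA g hg m hmA hmg hmx b hbg)
  exact hr.2 b e he f hf hbe hbf (key e he hbe hE) (key f hf hbf hF)
end

section
/- If A is a finite unconfined partial Steiner triple system and X ⊆ A, then δ(X) ≥ min(|X|, 2), where δ(X) = |X| − |bl(X)|. In particular every subset of A of size at most 2 is strongly embedded in A with respect to δ. -/
/-- Unconfined: every nonempty finite subset contains a point lying in at most one block
contained in that subset. -/
def Unconfined {M : Type*} (Bl : Set (Finset M)) : Prop :=
  ∀ A' : Finset M, A'.Nonempty →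
    ∃ a ∈ A', ∀ e ∈ Bl, ∀ f ∈ Bl, e ⊆ A' → f ⊆ A' → a ∈ e → a ∈ f → e = f

/-- The predimension `δ(X) = |X| - |bl(X)|`. -/
def deltaF {M : Type*} [DecidableEq M] (Bl : Finset (Finset M)) (X : Finset M) : ℤ :=
  (X.card : ℤ) - (Bl.filter (fun e => e ⊆ X)).card

/-- In a finite unconfined partial STS, `δ(X) ≥ min(|X|, 2)` for every subset `X`; in
particular every subset of size at most `2` is strong with respect to `δ`. -/
theorem unconfined_delta_ge {M : Type*} [Fintype M] [DecidableEq M]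
    (Bl : Finset (Finset M)) (hPSTS : IsPSTS (↑Bl : Set (Finset M)))
    (hu : Unconfined (↑Bl : Set (Finset M))) :
    (∀ X : Finset M, min (X.card : ℤ) 2 ≤ deltaF Bl X) ∧
      ∀ X : Finset M, X.card ≤ 2 → ∀ Y : Finset M, X ⊆ Y → deltaF Bl X ≤ deltaF Bl Y := by
  classical
  have hsmall : ∀ X : Finset M, X.card ≤ 2 → deltaF Bl X = X.card := by
    intro X hX
    unfold deltaF
    have hemp : Bl.filter (fun e => e ⊆ X) = ∅ := by
      apply Finset.filter_eq_empty_iff.mpr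
      intro e he hsub
      have h3 : e.card = 3 := hPSTS.1 e he
      have := Finset.card_le_card hsub
      omega
    rw [hemp]; simp
  have main : ∀ X : Finset M, min (X.card : ℤ) 2 ≤ deltaF Bl X := by
    intro X
    induction X using Finset.strongInduction with
    | _ X ih =>
      by_cases h2 : X.card ≤ 2
      · rw [hsmall X h2]; exact min_le_left _ _
      · push_neg at h2
        have hne : X.Nonempty := Finset.card_pos.mp (by omega)
        obtain ⟨a, ha, hau⟩ := hu X hne
        set X' := X.erase a with hX'
        have hss : X' ⊂ X := Finset.erase_ssubset ha
        have ihX' := ih X' hss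
        have hcard' : X'.card = X.card - 1 := Finset.card_erase_of_mem ha
        have hbl : (Bl.filter (fun e => e ⊆ X)).card ≤ (Bl.filter (fun e => e ⊆ X')).card + 1 := by
          have hsplit : Bl.filter (fun e => e ⊆ X) ⊆
              (Bl.filter (fun e => e ⊆ X')) ∪ (Bl.filter (fun e => e ⊆ X ∧ a ∈ e)) := by
            intro e he
            simp only [Finset.mem_filter, Finset.mem_union] at *
            by_cases hae : a ∈ e
            · exact Or.inr ⟨he.1, he.2, hae⟩
            · exact Or.inl ⟨he.1, fun x hx =>
                Finset.mem_erase.mpr ⟨fun hxa => hae (hxa ▸ hx), he.2 hx⟩⟩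
          have hone : (Bl.filter (fun e => e ⊆ X ∧ a ∈ e)).card ≤ 1 := by
            apply Finset.card_le_one.mpr
            intro e he f hf
            simp only [Finset.mem_filter] at he hf
            exact hau e (by exact_mod_cast he.1) f (by exact_mod_cast hf.1)
              he.2.1 hf.2.1 he.2.2 hf.2.2
          calc (Bl.filter (fun e => e ⊆ X)).card ≤ _ := Finset.card_le_card hsplit
            _ ≤ _ + _ := Finset.card_union_le _ _
            _ ≤ _ + 1 := by omega
        unfold deltaF at ihX' ⊢
        have h2' : (2 : ℤ) ≤ X'.card := by
          have : 2 ≤ X'.card := by omega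
          exact_mod_cast this
        rw [min_eq_right h2'] at ihX'
        rw [min_eq_right (by exact_mod_cast (by omega : 2 ≤ X.card) : (2:ℤ) ≤ (X.card:ℤ))]
        have hXc : (X.card : ℤ) = (X'.card : ℤ) + 1 := by
          have : X'.card + 1 = X.card := by omega
          exact_mod_cast this.symm
        omega
  refine ⟨main, fun X hX Y hXY => ?_⟩
  rw [hsmall X hX]
  have hY := main Y
  have hle : X.card ≤ Y.card := Finset.card_le_card hXY
  have h1 : (X.card : ℤ) ≤ Y.card := by exact_mod_cast hle
  have h2 : (X.card : ℤ) ≤ 2 := by exact_mod_cast hX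
  have := le_min h1 h2
  linarith [this.trans hY]
end

section
/- If A, A₁, A₂, B are finite unconfined partial Steiner triple systems with A₁ ⊆ B and A₂ strong in B (i.e. there is an HF-ordering of B with A₂ an initial segment), then A₁ ∩ A₂ is strong in A₁ (there is an HF-ordering of A₁ with A₁ ∩ A₂ an initial segment). -/
/-- `r` is a strict linear order on the set `S`. -/
def LinOn {M : Type*} (S : Set M) (r : M → M → Prop) : Prop :=
  (∀ a ∈ S, ¬r a a) ∧ (∀ a ∈ S, ∀ b ∈ S, ∀ c ∈ S, r a b → r b c → r a c) ∧
    ∀ a ∈ S, ∀ b ∈ S, a ≠ b → r a b ∨ r b a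

/-- `r` is an HF-ordering of the subsystem `S` (with its induced blocks). -/
def HFOn {M : Type*} (Bl : Set (Finset M)) (S : Set M) (r : M → M → Prop) : Prop :=
  LinOn S r ∧
    ∀ b ∈ S, ∀ e ∈ Bl, ∀ f ∈ Bl, (↑e : Set M) ⊆ S → (↑f : Set M) ⊆ S → b ∈ e → b ∈ f →
      (∀ x ∈ e, x ≠ b → r x b) → (∀ x ∈ f, x ≠ b → r x b) → e = f

/-- The subsystem `S` is unconfined. -/
def UnconfinedIn {M : Type*} (Bl : Set (Finset M)) (S : Set M) : Prop :=
  ∀ A' : Finset M, (↑A' : Set M) ⊆ S → A'.Nonempty →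
    ∃ a ∈ A', ∀ e ∈ Bl, ∀ f ∈ Bl, e ⊆ A' → f ⊆ A' → a ∈ e → a ∈ f → e = f

/-- `A ≤ S`: `A` is strong in `S`, i.e. some HF-ordering of `S` has `A` as an initial
segment. -/
def StrongIn {M : Type*} (Bl : Set (Finset M)) (A S : Set M) : Prop :=
  A ⊆ S ∧ ∃ r, HFOn Bl S r ∧ ∀ a ∈ A, ∀ b ∈ S, r b a → b ∈ A

/-- If `A₁ ⊆ B` and `A₂` is strong in `B`, then `A₁ ∩ A₂` is strong in `A₁`. -/
theorem strong_inter {M : Type*} (Bl : Set (Finset M)) (hPSTS : IsPSTS Bl)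
    (A A₁ A₂ B : Set M)
    (hAfin : A.Finite) (hA₁fin : A₁.Finite) (hA₂fin : A₂.Finite) (hBfin : B.Finite)
    (hAun : UnconfinedIn Bl A) (hA₁un : UnconfinedIn Bl A₁)
    (hA₂un : UnconfinedIn Bl A₂) (hBun : UnconfinedIn Bl B)
    (h1 : A₁ ⊆ B) (h2 : StrongIn Bl A₂ B) :
    StrongIn Bl (A₁ ∩ A₂) A₁ := by
  obtain ⟨hsub, r, ⟨⟨hirr, htrans, htot⟩, hHF⟩, hinit⟩ := h2
  refine ⟨Set.inter_subset_left, r, ⟨⟨?_, ?_, ?_⟩, ?_⟩, ?_⟩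
  · exact fun a ha => hirr a (h1 ha)
  · exact fun a ha b hb c hc => htrans a (h1 ha) b (h1 hb) c (h1 hc)
  · exact fun a ha b hb => htot a (h1 ha) b (h1 hb)
  · intro b hb e he f hf heS hfS hbe hbf h₁ h₂
    exact hHF b (h1 hb) e he f hf (heS.trans h1) (hfS.trans h1) hbe hbf h₁ h₂
  · rintro a ⟨ha1, ha2⟩ b hb hr
    exact ⟨hb, hinit a ha2 b (h1 hb) hr⟩
end

section
/- The strong-substructure relation ≤ⁿ is transitive: if A ≤ⁿ B and B ≤ⁿ C for finite unconfined partial Steiner triple systems A ⊆ B ⊆ C, then A ≤ⁿ C. -/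
/-- `A ≤ⁿ B`: for every `X ⊆ B∖A` with `|X| ≤ n`, `A` is strong in `A ∪ X`. -/
def StrongN {M : Type*} (Bl : Set (Finset M)) (n : ℕ) (A B : Set M) : Prop :=
  A ⊆ B ∧ ∀ X : Finset M, (↑X : Set M) ⊆ B \ A → X.card ≤ n → StrongIn Bl A (A ∪ ↑X)

/-- Transitivity of `≤ⁿ`. -/
theorem strongN_trans {M : Type*} (Bl : Set (Finset M)) (hPSTS : IsPSTS Bl) (n : ℕ)
    (A B C : Set M)
    (hAfin : A.Finite) (hBfin : B.Finite) (hCfin : C.Finite)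
    (hAun : UnconfinedIn Bl A) (hBun : UnconfinedIn Bl B) (hCun : UnconfinedIn Bl C)
    (hAB : StrongN Bl n A B) (hBC : StrongN Bl n B C) :
    StrongN Bl n A C := by
  classical
  obtain ⟨hAB1, hAB2⟩ := hAB
  obtain ⟨hBC1, hBC2⟩ := hBC
  refine ⟨hAB1.trans hBC1, ?_⟩
  intro X hX hXn
  set Xb := X.filter (· ∈ B) with hXbdef
  set Xc := X.filter (· ∉ B) with hXcdef
  have hXbB : (↑Xb : Set M) ⊆ B \ A := by
    intro x hx
    simp only [hXbdef, Finset.coe_filter, Set.mem_setOf_eq] at hx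
    exact ⟨hx.2, (hX hx.1).2⟩
  have hXcC : (↑Xc : Set M) ⊆ C \ B := by
    intro x hx
    simp only [hXcdef, Finset.coe_filter, Set.mem_setOf_eq] at hx
    exact ⟨(hX hx.1).1, hx.2⟩
  obtain ⟨_, s, ⟨hslin, hshf⟩, hsinit⟩ :=
    hAB2 Xb hXbB (le_trans (Finset.card_filter_le _ _) hXn)
  obtain ⟨_, r, ⟨hrlin, hrhf⟩, hrinit⟩ :=
    hBC2 Xc hXcC (le_trans (Finset.card_filter_le _ _) hXn)
  set S1 : Set M := A ∪ ↑Xb with hS1def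
  set S2 : Set M := (↑Xc : Set M) with hS2def
  have hS1B : S1 ⊆ B := by
    intro x hx
    rcases hx with hx | hx
    · exact hAB1 hx
    · exact (hXbB hx).1
  have hS2nB : ∀ x ∈ S2, x ∉ B := fun x hx => (hXcC hx).2
  have hdisj : ∀ x, x ∈ S1 → x ∈ S2 → False := fun x h1 h2 => hS2nB x h2 (hS1B h1)
  have hS2sub : S2 ⊆ B ∪ ↑Xc := fun x hx => Or.inr hx
  have hS1sub : S1 ⊆ B ∪ ↑Xc := fun x hx => Or.inl (hS1B hx)
  have hunion : A ∪ (↑X : Set M) = S1 ∪ S2 := by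
    ext x
    simp only [hS1def, hS2def, hXbdef, hXcdef, Set.mem_union, Finset.coe_filter,
      Set.mem_setOf_eq]
    by_cases hxB : x ∈ B <;> tauto
  -- the key fact: everything in S1 is r-below everything in S2
  have hrb : ∀ b ∈ S2, ∀ x ∈ S1, r x b := by
    intro b hb x hx
    have hxB : x ∈ B := hS1B hx
    have hne : x ≠ b := fun h => hdisj x hx (h ▸ hb)
    rcases hrlin.2.2 x (Or.inl hxB) b (hS2sub hb) hne with h | h
    · exact h
    · exact absurd (hrinit x hxB b (hS2sub hb) h) (hS2nB b hb)
  set t : M → M → Prop := fun x y =>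
    (x ∈ S1 ∧ y ∈ S1 ∧ s x y) ∨ (x ∈ S1 ∧ y ∈ S2) ∨ (x ∈ S2 ∧ y ∈ S2 ∧ r x y)
    with htdef
  rw [hunion]
  refine ⟨fun a ha => Or.inl (Or.inl ha), t, ⟨⟨?_, ?_, ?_⟩, ?_⟩, ?_⟩
  · -- irreflexive
    rintro a ha (⟨h1, _, hs⟩ | ⟨h1, h2⟩ | ⟨h1, _, hr⟩)
    · exact hslin.1 a h1 hs
    · exact hdisj a h1 h2
    · exact hrlin.1 a (hS2sub h1) hr
  · -- transitive
    rintro a ha b hb c hc (⟨ha1, hb1, hab⟩ | ⟨ha1, hb2⟩ | ⟨ha2, hb2, hab⟩)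
      (⟨hb1', hc1, hbc⟩ | ⟨hb1', hc2⟩ | ⟨hb2', hc2, hbc⟩)
    · exact Or.inl ⟨ha1, hc1, hslin.2.1 a ha1 b hb1 c hc1 hab hbc⟩
    · exact Or.inr (Or.inl ⟨ha1, hc2⟩)
    · exact absurd hb1 (fun h => hdisj b h hb2')
    · exact absurd hb1' (fun h => hdisj b h hb2)
    · exact absurd hb1' (fun h => hdisj b h hb2)
    · exact Or.inr (Or.inl ⟨ha1, hc2⟩)
    · exact absurd hb1' (fun h => hdisj b h hb2)
    · exact absurd hb1' (fun h => hdisj b h hb2)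
    · exact Or.inr (Or.inr ⟨ha2, hc2,
        hrlin.2.1 a (hS2sub ha2) b (hS2sub hb2) c (hS2sub hc2) hab hbc⟩)
  · -- total
    intro a ha b hb hne
    rcases ha with ha1 | ha2
    · rcases hb with hb1 | hb2
      · rcases hslin.2.2 a ha1 b hb1 hne with h | h
        · exact Or.inl (Or.inl ⟨ha1, hb1, h⟩)
        · exact Or.inr (Or.inl ⟨hb1, ha1, h⟩)
      · exact Or.inl (Or.inr (Or.inl ⟨ha1, hb2⟩))
    · rcases hb with hb1 | hb2
      · exact Or.inr (Or.inr (Or.inl ⟨hb1, ha2⟩))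
      · rcases hrlin.2.2 a (hS2sub ha2) b (hS2sub hb2) hne with h | h
        · exact Or.inl (Or.inr (Or.inr ⟨ha2, hb2, h⟩))
        · exact Or.inr (Or.inr (Or.inr ⟨hb2, ha2, h⟩))
  · -- HF condition
    intro b hb e he f hf heS hfS hbe hbf hre hrf
    rcases hb with hb1 | hb2
    · -- b ∈ S1: both blocks live in S1 and are s-histories
      have key : ∀ g : Finset M, (↑g : Set M) ⊆ S1 ∪ S2 → b ∈ g →
          (∀ x ∈ g, x ≠ b → t x b) → (↑g : Set M) ⊆ S1 ∧ ∀ x ∈ g, x ≠ b → s x b := by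
        intro g hgS hbg hg
        have hsub : (↑g : Set M) ⊆ S1 ∧ ∀ x ∈ g, x ≠ b → s x b := by
          constructor
          · intro x hx
            by_cases hxb : x = b
            · exact hxb ▸ hb1
            · rcases hg x hx hxb with ⟨h1, _, _⟩ | ⟨_, h2⟩ | ⟨_, h2, _⟩
              · exact h1
              · exact absurd hb1 (fun h => hdisj b h h2)
              · exact absurd hb1 (fun h => hdisj b h h2)
          · intro x hx hxb
            rcases hg x hx hxb with ⟨_, _, hs⟩ | ⟨_, h2⟩ | ⟨_, h2, _⟩
            · exact hs
            · exact absurd hb1 (fun h => hdisj b h h2)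
            · exact absurd hb1 (fun h => hdisj b h h2)
        exact hsub
      obtain ⟨heS1, hes⟩ := key e heS hbe hre
      obtain ⟨hfS1, hfs⟩ := key f hfS hbf hrf
      exact hshf b hb1 e he f hf heS1 hfS1 hbe hbf hes hfs
    · -- b ∈ S2: both blocks live in B ∪ Xc and are r-histories
      have key : ∀ g : Finset M, (↑g : Set M) ⊆ S1 ∪ S2 → b ∈ g →
          (∀ x ∈ g, x ≠ b → t x b) → (↑g : Set M) ⊆ B ∪ ↑Xc ∧ ∀ x ∈ g, x ≠ b → r x b := by
        intro g hgS hbg hg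
        constructor
        · intro x hx
          rcases hgS hx with h | h
          · exact hS1sub h
          · exact hS2sub h
        · intro x hx hxb
          rcases hg x hx hxb with ⟨_, h2, _⟩ | ⟨h1, _⟩ | ⟨_, _, hr⟩
          · exact absurd h2 (fun h => hdisj b h hb2)
          · exact hrb b hb2 x h1
          · exact hr
      obtain ⟨heB, her⟩ := key e heS hbe hre
      obtain ⟨hfB, hfr⟩ := key f hfS hbf hrf
      exact hrhf b (hS2sub hb2) e he f hf heB hfB hbe hbf her hfr
  · -- A is an initial segment
    rintro a ha b hb (⟨hb1, ha1, hs⟩ | ⟨_, ha2⟩ | ⟨_, ha2, _⟩)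
    · exact hsinit a ha b hb1 hs
    · exact absurd ha2 (fun h => hdisj a (Or.inl ha) h)
    · exact absurd ha2 (fun h => hdisj a (Or.inl ha) h)
end

section
/- Let A ≤ B be finite unconfined partial Steiner triple systems, b ∈ B∖A, and suppose there is a block {a₁, a₂, b} with a₁, a₂ ∈ A. Then A ∪ {b} ≤ B. -/
/-- Auxiliary order: move `b` to sit immediately after `A`, keeping `r` elsewhere. -/
def auxOrd {M : Type*} (A : Set M) (b : M) (r : M → M → Prop) : M → M → Prop :=
  fun x y => (x ∈ A ∧ y ∈ A ∧ r x y) ∨ (x ∈ A ∧ y ∉ A) ∨ (x = b ∧ y ∉ A ∧ y ≠ b) ∨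
    (x ∉ A ∧ x ≠ b ∧ y ∉ A ∧ y ≠ b ∧ r x y)

/-- If `A ≤ B`, `b ∈ B∖A`, and there is a block `{a₁, a₂, b}` with `a₁, a₂ ∈ A`, then
`A ∪ {b} ≤ B`. -/
theorem strong_add_point {M : Type*} [DecidableEq M] (Bl : Set (Finset M))
    (hPSTS : IsPSTS Bl) (A B : Set M)
    (hAfin : A.Finite) (hBfin : B.Finite)
    (hAun : UnconfinedIn Bl A) (hBun : UnconfinedIn Bl B)
    (hAB : StrongIn Bl A B) (b : M) (hb : b ∈ B \ A)
    (a₁ a₂ : M) (ha₁ : a₁ ∈ A) (ha₂ : a₂ ∈ A)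
    (e : Finset M) (he : e ∈ Bl) (heq : e = {a₁, a₂, b}) :
    StrongIn Bl (A ∪ {b}) B := by
  obtain ⟨hABsub, r, ⟨⟨hirr, htrans, htot⟩, hHF⟩, hinit⟩ := hAB
  obtain ⟨hbB, hbA⟩ := hb
  -- Every element of `A` precedes (in `r`) every element of `B \ A`.
  have hbelow : ∀ x ∈ A, ∀ y ∈ B, y ∉ A → r x y := by
    intro x hx y hy hyA
    rcases htot x (hABsub hx) y hy (fun h => hyA (h ▸ hx)) with h | h
    · exact h
    · exact absurd (hinit x hx y hy h) hyA
  -- `e` is a top-`b` block under `r`.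
  have heB : (↑e : Set M) ⊆ B := by
    intro y hy
    rw [heq] at hy
    simp only [Finset.coe_insert, Finset.coe_singleton, Set.mem_insert_iff,
      Set.mem_singleton_iff] at hy
    rcases hy with h | h | h
    · exact h ▸ hABsub ha₁
    · exact h ▸ hABsub ha₂
    · exact h ▸ hbB
  have hbe : b ∈ e := by rw [heq]; simp
  have hetop : ∀ y ∈ e, y ≠ b → r y b := by
    intro y hy hyb
    rw [heq] at hy
    simp only [Finset.mem_insert, Finset.mem_singleton] at hy
    rcases hy with h | h | h
    · exact hbelow y (h ▸ ha₁) b hbB hbA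
    · exact hbelow y (h ▸ ha₂) b hbB hbA
    · exact absurd h hyb
  -- Key lemma: any block whose top under `auxOrd` is `v` has top `v` under `r` as well.
  have key : ∀ v ∈ B, ∀ g ∈ Bl, (↑g : Set M) ⊆ B → v ∈ g →
      (∀ x ∈ g, x ≠ v → auxOrd A b r x v) → ∀ x ∈ g, x ≠ v → r x v := by
    intro v hvB g hg hgB hvg hall x hxg hxv
    have hxB : x ∈ B := hgB hxg
    rcases hall x hxg hxv with ⟨_, _, h⟩ | ⟨hxA, hvA⟩ | ⟨hxb, hvA, hvb⟩ |
      ⟨_, _, _, _, h⟩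
    · exact h
    · exact hbelow x hxA v hvB hvA
    · -- `x = b`; if `¬ r b v` then `g` is a top-`b` block under `r`, so `g = e`,
      -- contradicting `v ∉ A ∪ {b}`.
      subst hxb
      by_contra hnb
      have hvb' : r v x := by
        rcases htot v hvB x hxB (Ne.symm hxv) with h | h
        · exact h
        · exact absurd h hnb
      have hgtop : ∀ y ∈ g, y ≠ x → r y x := by
        intro y hyg hyb
        by_cases hyv : y = v
        · exact hyv ▸ hvb'
        · rcases hall y hyg hyv with ⟨_, hvA', _⟩ | ⟨hyA, _⟩ | ⟨hyb', _, _⟩ |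
            ⟨_, _, _, _, hr2⟩
          · exact absurd hvA' hvA
          · exact hbelow y hyA x hxB hbA
          · exact absurd hyb' hyb
          · exact htrans y (hgB hyg) v hvB x hxB hr2 hvb'
      have hge : g = e := hHF x hxB g hg e he hgB heB hxg hbe hgtop hetop
      have hve : v ∈ e := hge ▸ hvg
      rw [heq] at hve
      simp only [Finset.mem_insert, Finset.mem_singleton] at hve
      rcases hve with h | h | h
      · exact hvA (h ▸ ha₁)
      · exact hvA (h ▸ ha₂)
      · exact hvb h
    · exact h
  refine ⟨Set.union_subset hABsub (by simpa using hbB), auxOrd A b r, ⟨⟨?_, ?_, ?_⟩, ?_⟩, ?_⟩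
  · -- irreflexivity
    intro a haB h
    rcases h with ⟨_, _, h⟩ | ⟨h1, h2⟩ | ⟨h1, _, h3⟩ | ⟨_, _, _, _, h⟩
    · exact hirr a haB h
    · exact h2 h1
    · exact h3 h1
    · exact hirr a haB h
  · -- transitivity
    intro x hx y hy z hz hxy hyz
    rcases hxy with ⟨hxA, hyA, hr1⟩ | ⟨hxA, hyA⟩ | ⟨hxb, hyA, hyb⟩ |
      ⟨hxA, hxb, hyA, hyb, hr1⟩
    · rcases hyz with ⟨_, hzA, hr2⟩ | ⟨_, hzA⟩ | ⟨hyb, _, _⟩ | ⟨hyA', _⟩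
      · exact Or.inl ⟨hxA, hzA, htrans x hx y hy z hz hr1 hr2⟩
      · exact Or.inr (Or.inl ⟨hxA, hzA⟩)
      · exact absurd (hyb ▸ hyA) hbA
      · exact absurd hyA hyA'
    · rcases hyz with ⟨hyA', _⟩ | ⟨hyA', _⟩ | ⟨_, hzA, hzb⟩ | ⟨_, _, hzA, hzb, _⟩
      · exact absurd hyA' hyA
      · exact absurd hyA' hyA
      · exact Or.inr (Or.inl ⟨hxA, hzA⟩)
      · exact Or.inr (Or.inl ⟨hxA, hzA⟩)
    · rcases hyz with ⟨hyA', _⟩ | ⟨hyA', _⟩ | ⟨hyb', _⟩ | ⟨_, _, hzA, hzb, _⟩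
      · exact absurd hyA' hyA
      · exact absurd hyA' hyA
      · exact absurd hyb' hyb
      · exact Or.inr (Or.inr (Or.inl ⟨hxb, hzA, hzb⟩))
    · rcases hyz with ⟨hyA', _⟩ | ⟨hyA', _⟩ | ⟨hyb', _⟩ | ⟨_, _, hzA, hzb, hr2⟩
      · exact absurd hyA' hyA
      · exact absurd hyA' hyA
      · exact absurd hyb' hyb
      · exact Or.inr (Or.inr (Or.inr ⟨hxA, hxb, hzA, hzb,
          htrans x hx y hy z hz hr1 hr2⟩))
  · -- totality
    intro x hx y hy hxy
    by_cases hxA : x ∈ A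
    · by_cases hyA : y ∈ A
      · rcases htot x hx y hy hxy with h | h
        · exact Or.inl (Or.inl ⟨hxA, hyA, h⟩)
        · exact Or.inr (Or.inl ⟨hyA, hxA, h⟩)
      · exact Or.inl (Or.inr (Or.inl ⟨hxA, hyA⟩))
    · by_cases hyA : y ∈ A
      · exact Or.inr (Or.inr (Or.inl ⟨hyA, hxA⟩))
      · by_cases hxb : x = b
        · exact Or.inl (Or.inr (Or.inr (Or.inl
            ⟨hxb, hyA, fun h => hxy (hxb.trans h.symm)⟩)))
        · by_cases hyb : y = b
          · exact Or.inr (Or.inr (Or.inr (Or.inl ⟨hyb, hxA, hxb⟩)))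
          · rcases htot x hx y hy hxy with h | h
            · exact Or.inl (Or.inr (Or.inr (Or.inr ⟨hxA, hxb, hyA, hyb, h⟩)))
            · exact Or.inr (Or.inr (Or.inr (Or.inr ⟨hyA, hyb, hxA, hxb, h⟩)))
  · -- HF property
    intro v hv e' he' f' hf' he'B hf'B hve hvf htope htopf
    exact hHF v hv e' he' f' hf' he'B hf'B hve hvf
      (key v hv e' he' he'B hve htope) (key v hv f' hf' hf'B hvf htopf)
  · -- `A ∪ {b}` is an initial segment
    intro a ha c hc h
    rcases h with ⟨hcA, _⟩ | ⟨hcA, _⟩ | ⟨hcb, _, _⟩ | ⟨_, _, haA, hab, _⟩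
    · exact Or.inl hcA
    · exact Or.inl hcA
    · exact Or.inr (by simp [hcb])
    · rcases ha with haA' | hab'
      · exact absurd haA' haA
      · exact absurd hab' hab
end
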